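/- Let 2 ≤ dA ≤ dB and d = dA·dB. Suppose a complete set of d+1 pairwise mutually unbiased orthonormal bases of EuclideanSpace ℂ (Fin dA × Fin dB) contains dA+1 bases all of whose vectors are product vectors u ⊗ v. Then every vector of each of the remaining d − dA bases is maximally entangled, i.e. has subsystem purity P(ψ) = 1/dA. -/

import Mathlib

/-- Purity of the reduced density operator on subsystem `A`. -/
noncomputable def purity {dA dB : ℕ} (ψ : EuclideanSpace ℂ (Fin dA × Fin dB)) : ℝ :=
  ∑ a : Fin dA, ∑ a' : Fin dA,
    ‖∑ b : Fin dB, ψ (a, b) * (starRingEnd ℂ) (ψ (a', b))‖ ^ 2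

/-- A product vector `(u ⊗ v)(a,b) = u(a)·v(b)`. -/
def IsProductVector {dA dB : ℕ} (ψ : EuclideanSpace ℂ (Fin dA × Fin dB)) : Prop :=
  ∃ (u : EuclideanSpace ℂ (Fin dA)) (v : EuclideanSpace ℂ (Fin dB)),
    ∀ (a : Fin dA) (b : Fin dB), ψ (a, b) = u a * v b

/-! A complete set of `d + 1` mutually unbiased bases is a complex projective 2-design:
`∑ₘⱼ |eₘⱼ⟩⟨eₘⱼ| ⊗ |eₘⱼ⟩⟨eₘⱼ| = 1 + SWAP`, because the Hilbert–Schmidt norm of the difference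
only involves the overlaps `|⟨eₘⱼ, eₙₖ⟩|²`, which are prescribed, and it comes out zero.
Purity is a linear functional of `|ψ⟩⟨ψ| ⊗ |ψ⟩⟨ψ|`, namely pairing with `SWAP_A ⊗ 1_B`, so the
purities of all `d (d + 1)` basis vectors add up to `dA dB (dA + dB)`. The `dA + 1` product bases
contribute `1` per vector, leaving `d (dB - 1) = (d - dA) · d / dA` for the other `d - dA` bases;
since every unit vector has purity at least `1 / dA` (Cauchy–Schwarz on the diagonal of the
reduced state), each of them attains this bound. -/

open ComplexConjugate Finset

lemma OrthonormalBasis.card_eq_card_of_euclideanSpace {ι κ : Type*} [Fintype ι] [Fintype κ]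
    (b : OrthonormalBasis κ ℂ (EuclideanSpace ℂ ι)) : Fintype.card κ = Fintype.card ι :=
  (Module.finrank_eq_card_basis b.toBasis).symm.trans finrank_euclideanSpace

lemma EuclideanSpace.inner_eq_sum {ι : Type*} [Fintype ι] (x y : EuclideanSpace ℂ ι) :
    inner ℂ x y = ∑ i, y i * conj (x i) := by
  simp [PiLp.inner_apply]

lemma Complex.sum_mul_conj {ι : Type*} (s : Finset ι) (f : ι → ℂ) :
    ∑ i ∈ s, f i * conj (f i) = ((∑ i ∈ s, ‖f i‖ ^ 2 : ℝ) : ℂ) := by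
  push_cast
  exact sum_congr rfl fun i _ => by rw [Complex.mul_conj, Complex.normSq_eq_norm_sq]; push_cast; rfl

lemma EuclideanSpace.sum_mul_conj_self {ι : Type*} [Fintype ι] (x : EuclideanSpace ℂ ι) :
    ∑ i, x i * conj (x i) = ((‖x‖ ^ 2 : ℝ) : ℂ) := by
  rw [Complex.sum_mul_conj, EuclideanSpace.norm_sq_eq]

def MutuallyUnbiased {ι κ : Type*} [Fintype ι] [Fintype κ]
    (b b' : OrthonormalBasis κ ℂ (EuclideanSpace ℂ ι)) : Prop :=
  ∀ j k, ‖inner ℂ (b j) (b' k)‖ ^ 2 = 1 / Fintype.card ι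

section TwoDesign

variable {ι : Type*} [Fintype ι]

/-- Operators on `ℂ^ι ⊗ ℂ^ι` are encoded as vectors indexed by (row, column), so that the
Euclidean inner product is the Hilbert–Schmidt one; this is `|ψ⟩⟨ψ| ⊗ |ψ⟩⟨ψ|`. -/
noncomputable def projTensorSq (ψ : EuclideanSpace ℂ ι) :
    EuclideanSpace ℂ ((ι × ι) × (ι × ι)) :=
  WithLp.toLp 2 fun W => ψ W.1.1 * ψ W.1.2 * conj (ψ W.2.1) * conj (ψ W.2.2)

lemma inner_projTensorSq_projTensorSq (ψ φ : EuclideanSpace ℂ ι) :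
    inner ℂ (projTensorSq ψ) (projTensorSq φ) = ((‖inner ℂ ψ φ‖ ^ 4 : ℝ) : ℂ) := by
  have hquartic : ((‖inner ℂ ψ φ‖ ^ 4 : ℝ) : ℂ) = (inner ℂ ψ φ * conj (inner ℂ ψ φ)) ^ 2 := by
    rw [Complex.mul_conj, Complex.normSq_eq_norm_sq]; push_cast; ring
  rw [hquartic, EuclideanSpace.inner_eq_sum, EuclideanSpace.inner_eq_sum, map_sum, sum_mul_sum, sq,
    sum_mul_sum]
  simp only [projTensorSq, PiLp.toLp_apply, Fintype.sum_prod_type, sum_mul_sum, map_mul,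
    Complex.conj_conj]
  refine sum_congr rfl fun p _ => sum_congr rfl fun r _ => sum_congr rfl fun q _ =>
    sum_congr rfl fun s _ => by ring

variable [DecidableEq ι]

noncomputable def idTensorSq : EuclideanSpace ℂ ((ι × ι) × (ι × ι)) :=
  WithLp.toLp 2 fun W => if W.1 = W.2 then 1 else 0

noncomputable def swapTensorSq : EuclideanSpace ℂ ((ι × ι) × (ι × ι)) :=
  WithLp.toLp 2 fun W => if W.1 = W.2.swap then 1 else 0

lemma inner_projTensorSq_idTensorSq (ψ : EuclideanSpace ℂ ι) :
    inner ℂ (projTensorSq ψ) idTensorSq = ((‖ψ‖ ^ 4 : ℝ) : ℂ) := by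
  rw [EuclideanSpace.inner_eq_sum, show 4 = 2 * 2 by rfl, pow_mul, Complex.ofReal_pow,
    ← EuclideanSpace.sum_mul_conj_self, sq, sum_mul_sum]
  simp only [projTensorSq, idTensorSq, PiLp.toLp_apply, Fintype.sum_prod_type, Prod.ext_iff,
    ite_and, map_mul, Complex.conj_conj, ite_mul, one_mul, zero_mul, sum_ite_irrel, sum_ite_eq,
    mem_univ, if_true, sum_const_zero]
  exact sum_congr rfl fun p _ => sum_congr rfl fun r _ => by ring

lemma inner_idTensorSq_idTensorSq :
    inner ℂ (idTensorSq (ι := ι)) idTensorSq = Fintype.card ι ^ 2 := by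
  rw [EuclideanSpace.inner_eq_sum]
  simp [idTensorSq, Fintype.sum_prod_type, Prod.ext_iff, ite_and, sq]

lemma inner_idTensorSq_swapTensorSq :
    inner ℂ (idTensorSq (ι := ι)) swapTensorSq = Fintype.card ι := by
  rw [EuclideanSpace.inner_eq_sum]
  simp [idTensorSq, swapTensorSq, Fintype.sum_prod_type, Prod.ext_iff, ite_and, apply_ite conj,
    eq_comm]

lemma inner_projTensorSq_swapTensorSq (ψ : EuclideanSpace ℂ ι) :
    inner ℂ (projTensorSq ψ) swapTensorSq = ((‖ψ‖ ^ 4 : ℝ) : ℂ) := by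
  rw [EuclideanSpace.inner_eq_sum, show 4 = 2 * 2 by rfl, pow_mul, Complex.ofReal_pow,
    ← EuclideanSpace.sum_mul_conj_self, sq, sum_mul_sum]
  simp only [projTensorSq, swapTensorSq, PiLp.toLp_apply, Fintype.sum_prod_type, Prod.ext_iff,
    Prod.swap_prod_mk, ite_and, map_mul, Complex.conj_conj, ite_mul, one_mul, zero_mul, sum_ite_eq,
    mem_univ, if_true]
  exact sum_congr rfl fun p _ => sum_congr rfl fun r _ => by ring

lemma inner_swapTensorSq_swapTensorSq :
    inner ℂ (swapTensorSq (ι := ι)) swapTensorSq = Fintype.card ι ^ 2 := by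
  rw [EuclideanSpace.inner_eq_sum]
  simp [swapTensorSq, Fintype.sum_prod_type, Prod.ext_iff, ite_and, sq]

lemma inner_swapTensorSq_idTensorSq :
    inner ℂ (swapTensorSq (ι := ι)) idTensorSq = Fintype.card ι := by
  rw [EuclideanSpace.inner_eq_sum]
  simp [idTensorSq, swapTensorSq, Fintype.sum_prod_type, Prod.ext_iff, ite_and, apply_ite conj,
    eq_comm]

end TwoDesign

section CompleteMUB

variable {ι β κ : Type*} [Fintype ι] [Fintype β] [Fintype κ]
  {e : β → OrthonormalBasis κ ℂ (EuclideanSpace ℂ ι)}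

lemma sum_norm_inner_pow_four_eq_two (hβ : Fintype.card β = Fintype.card ι + 1)
    (he : Pairwise fun m n => MutuallyUnbiased (e m) (e n)) (m : β) (j : κ) :
    ∑ n, ∑ k, ‖inner ℂ (e m j) (e n k)‖ ^ 4 = 2 := by
  classical
  have hκ : Fintype.card κ = Fintype.card ι := (e m).card_eq_card_of_euclideanSpace
  have hd : (Fintype.card ι : ℝ) ≠ 0 := by
    rw [← hκ]; exact_mod_cast (Fintype.card_pos_iff.mpr ⟨j⟩).ne'
  have hsame : ∑ k, ‖inner ℂ (e m j) (e m k)‖ ^ 4 = 1 := by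
    simp [orthonormal_iff_ite.mp (e m).orthonormal, apply_ite (fun z : ℂ => ‖z‖ ^ 4)]
  have hother : ∀ n ∈ ({m}ᶜ : Finset β),
      ∑ k, ‖inner ℂ (e m j) (e n k)‖ ^ 4 = 1 / Fintype.card ι := by
    intro n hn
    have hmn : m ≠ n := Ne.symm (by simpa using hn)
    simp_rw [show (4 : ℕ) = 2 * 2 from rfl, pow_mul, he hmn j]
    simp [hκ]
    field_simp
  rw [Fintype.sum_eq_add_sum_compl m, hsame, sum_congr rfl hother]
  norm_num [card_compl, hβ, hd]

theorem sum_projTensorSq_eq_idTensorSq_add_swapTensorSq [DecidableEq ι]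
    (hβ : Fintype.card β = Fintype.card ι + 1)
    (he : Pairwise fun m n => MutuallyUnbiased (e m) (e n)) :
    ∑ m, ∑ j, projTensorSq (e m j) = idTensorSq + swapTensorSq := by
  set d : ℂ := (Fintype.card ι : ℂ)
  set T := ∑ m, ∑ j, projTensorSq (e m j)
  obtain ⟨m₀⟩ : Nonempty β := Fintype.card_pos_iff.mp (by omega)
  have hκ : Fintype.card κ = Fintype.card ι := (e m₀).card_eq_card_of_euclideanSpace
  have hunit : ∀ m j, ‖e m j‖ = 1 := fun m => (e m).orthonormal.1
  have hTT : inner ℂ T T = 2 * (d * (d + 1)) := by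
    simp only [T, sum_inner]
    simp only [inner_sum, inner_projTensorSq_projTensorSq, ← Complex.ofReal_sum,
      sum_norm_inner_pow_four_eq_two hβ he]
    simp [hβ, hκ, d]
    ring
  have hTI : inner ℂ T idTensorSq = d * (d + 1) := by
    simp [T, inner_projTensorSq_idTensorSq, hunit, hβ, hκ, d]
    ring
  have hTS : inner ℂ T swapTensorSq = d * (d + 1) := by
    simp [T, inner_projTensorSq_swapTensorSq, hunit, hβ, hκ, d]
    ring
  have hIT : inner ℂ idTensorSq T = d * (d + 1) := by
    rw [← inner_conj_symm, hTI]; simp [d]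
  have hST : inner ℂ swapTensorSq T = d * (d + 1) := by
    rw [← inner_conj_symm, hTS]; simp [d]
  have hzero :
      inner ℂ (T - (idTensorSq + swapTensorSq)) (T - (idTensorSq + swapTensorSq)) = 0 := by
    simp only [inner_sub_left, inner_sub_right, inner_add_left, inner_add_right, hTT, hTI, hTS,
      hIT, hST, inner_idTensorSq_idTensorSq, inner_idTensorSq_swapTensorSq,
      inner_swapTensorSq_idTensorSq, inner_swapTensorSq_swapTensorSq]
    ring
  exact sub_eq_zero.mp (inner_self_eq_zero.mp hzero)

end CompleteMUB

section Purity

variable {dA dB : ℕ}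

/-- `purity ψ = Tr[(|ψ⟩⟨ψ| ⊗ |ψ⟩⟨ψ|) (SWAP_A ⊗ 1_B)]`. -/
lemma purity_eq_sum_projTensorSq (ψ : EuclideanSpace ℂ (Fin dA × Fin dB)) :
    (purity ψ : ℂ) =
      ∑ a, ∑ a', ∑ b, ∑ b', projTensorSq ψ (((a, b), (a', b')), ((a', b), (a, b'))) := by
  push_cast [purity]
  refine sum_congr rfl fun a _ => sum_congr rfl fun a' _ => ?_
  rw [← Complex.ofReal_pow, ← Complex.normSq_eq_norm_sq, ← Complex.mul_conj, map_sum, sum_mul_sum]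
  simp only [projTensorSq, PiLp.toLp_apply, map_mul, Complex.conj_conj]
  exact sum_congr rfl fun b _ => sum_congr rfl fun b' _ => by ring

theorem sum_purity_of_mutuallyUnbiased {β κ : Type*} [Fintype β] [Fintype κ]
    {e : β → OrthonormalBasis κ ℂ (EuclideanSpace ℂ (Fin dA × Fin dB))}
    (hβ : Fintype.card β = dA * dB + 1)
    (he : Pairwise fun m n => MutuallyUnbiased (e m) (e n)) :
    ∑ m, ∑ j, purity (e m j) = dA * dB * (dA + dB) := by
  have hdesign := sum_projTensorSq_eq_idTensorSq_add_swapTensorSq (by simpa using hβ) he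
  have key : ∀ W, ∑ m, ∑ j, projTensorSq (e m j) W =
      (idTensorSq + swapTensorSq : EuclideanSpace ℂ _) W := by
    intro W; rw [← hdesign]; simp [WithLp.ofLp_sum]
  apply Complex.ofReal_injective
  push_cast
  calc ∑ m, ∑ j, ((purity (e m j) : ℝ) : ℂ)
      = ∑ a, ∑ a', ∑ b, ∑ b', ∑ m, ∑ j,
          projTensorSq (e m j) (((a, b), (a', b')), ((a', b), (a, b'))) := by
        simp_rw [purity_eq_sum_projTensorSq, sum_comm (γ := β), sum_comm (γ := κ)]
    _ = dA * dB * (dA + dB) := by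
        simp only [key]
        simp [idTensorSq, swapTensorSq, Prod.ext_iff, sum_add_distrib, ite_and]
        ring

lemma sum_sum_norm_sq_of_norm_eq_one {ψ : EuclideanSpace ℂ (Fin dA × Fin dB)} (hψ : ‖ψ‖ = 1) :
    ∑ a, ∑ b, ‖ψ (a, b)‖ ^ 2 = 1 := by
  rw [← Fintype.sum_prod_type', ← EuclideanSpace.norm_sq_eq, hψ, one_pow]

lemma purity_of_isProductVector {ψ : EuclideanSpace ℂ (Fin dA × Fin dB)} (hψ : ‖ψ‖ = 1)
    (hprod : IsProductVector ψ) : purity ψ = 1 := by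
  obtain ⟨u, v, huv⟩ := hprod
  have hnorm : ‖u‖ ^ 2 * ‖v‖ ^ 2 = 1 := by
    rw [← sum_sum_norm_sq_of_norm_eq_one hψ, EuclideanSpace.norm_sq_eq, EuclideanSpace.norm_sq_eq,
      sum_mul_sum]
    simp [huv, mul_pow]
  have hrow : ∀ a a', ‖∑ b, ψ (a, b) * conj (ψ (a', b))‖ = ‖u a‖ * ‖u a'‖ * ‖v‖ ^ 2 := by
    intro a a'
    have : ∑ b, ψ (a, b) * conj (ψ (a', b)) = u a * conj (u a') * ∑ b, v b * conj (v b) := by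
      rw [mul_sum]
      exact sum_congr rfl fun b _ => by rw [huv, huv, map_mul]; ring
    rw [this, EuclideanSpace.sum_mul_conj_self]
    simp
  simp only [purity, hrow, mul_pow, ← sum_mul, ← mul_sum, ← EuclideanSpace.norm_sq_eq]
  linear_combination (‖u‖ ^ 2 * ‖v‖ ^ 2 + 1) * hnorm

lemma one_div_le_purity {ψ : EuclideanSpace ℂ (Fin dA × Fin dB)} (hψ : ‖ψ‖ = 1) :
    1 / dA ≤ purity ψ := by
  set t : Fin dA → ℝ := fun a => ∑ b, ‖ψ (a, b)‖ ^ 2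
  have hdiag : ∑ a, t a ^ 2 ≤ purity ψ := by
    refine sum_le_sum fun a _ => ?_
    have hta : t a ^ 2 = ‖∑ b, ψ (a, b) * conj (ψ (a, b))‖ ^ 2 := by
      rw [Complex.sum_mul_conj, Complex.norm_real, Real.norm_of_nonneg (by positivity)]
    rw [hta]
    exact single_le_sum (f := fun a' => ‖∑ b, ψ (a, b) * conj (ψ (a', b))‖ ^ 2)
      (fun _ _ => by positivity) (mem_univ a)
  have hcs : 1 ≤ dA * ∑ a, t a ^ 2 := by
    simpa [t, sum_sum_norm_sq_of_norm_eq_one hψ] using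
      sq_sum_le_card_mul_sum_sq (s := univ) (f := t)
  have hpos : 0 ≤ purity ψ := hdiag.trans' (by positivity)
  exact div_le_of_le_mul₀ (by positivity) hpos
    (by linarith [mul_le_mul_of_nonneg_left hdiag (Nat.cast_nonneg' dA)])

end Purity

theorem remaining_bases_maximally_entangled (dA dB : ℕ)
    (e : Fin (dA * dB + 1) →
      OrthonormalBasis (Fin (dA * dB)) ℂ (EuclideanSpace ℂ (Fin dA × Fin dB)))
    (hmub : ∀ m n : Fin (dA * dB + 1), m ≠ n →
      ∀ j k : Fin (dA * dB),
        ‖(inner ℂ (e m j) (e n k) : ℂ)‖ ^ 2 = 1 / (dA * dB : ℝ))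
    (g : Fin (dA + 1) → Fin (dA * dB + 1)) (hg : Function.Injective g)
    (hprod : ∀ (r : Fin (dA + 1)) (j : Fin (dA * dB)), IsProductVector (e (g r) j)) :
    ∀ m : Fin (dA * dB + 1), m ∉ Set.range g →
      ∀ j : Fin (dA * dB), purity (e m j) = 1 / (dA : ℝ) := by
  intro m hm j
  have hd : 0 < dA * dB := Fin.pos j
  have hunit : ∀ n k, ‖e n k‖ = 1 := fun n => (e n).orthonormal.1
  have he : Pairwise fun m n => MutuallyUnbiased (e m) (e n) := fun m n hmn j k => by
    simpa using hmub m n hmn j k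
  set R := univ.image g
  have hR : ∑ n ∈ R, ∑ k, purity (e n k) = (dA + 1) * (dA * dB) := by
    rw [sum_image hg.injOn]
    simp [purity_of_isProductVector (hunit _ _) (hprod _ _)]
  have hRc : ∑ n ∈ Rᶜ, ∑ k, purity (e n k) = ∑ n ∈ Rᶜ, ∑ _k : Fin (dA * dB), 1 / (dA : ℝ) := by
    have htotal := sum_purity_of_mutuallyUnbiased (by simp) he
    rw [← sum_add_sum_compl R, hR] at htotal
    have hcard : Rᶜ.card = dA * dB - dA := by
      rw [card_compl, card_image_of_injective _ hg]; simp
    have hA : (dA : ℝ) ≠ 0 := by exact_mod_cast (Nat.pos_of_mul_pos_right hd).ne'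
    simp [hcard, Nat.cast_sub (Nat.le_mul_of_pos_right dA (Nat.pos_of_mul_pos_left hd))]
    field_simp
    linarith
  have hle : ∀ n ∈ Rᶜ, ∑ _k, 1 / (dA : ℝ) ≤ ∑ k, purity (e n k) :=
    fun n _ => sum_le_sum fun k _ => one_div_le_purity (hunit n k)
  have hrow := (sum_eq_sum_iff_of_le hle).1 hRc.symm m (by simpa [R] using hm)
  exact ((sum_eq_sum_iff_of_le fun k _ => one_div_le_purity (hunit m k)).1 hrow j (mem_univ j)).symm
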